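/- The Bargmann type transform $\mathbf{B}_{\Omega,N}\varphi(z) = \sum_{n\in I_N} a_n\, e^{-\pi n^T(\Omega/N)n}\, e^{2\pi z^T n}\, \vartheta_N(i(z + i\Omega n/N),\Omega)$ of $\varphi = \sum_{n\in I_N} a_n \epsilon_n$ satisfies the quasi-periodicity conditions $\mathbf{B}_{\Omega,N}\varphi(z + im) = \mathbf{B}_{\Omega,N}\varphi(z)$ and $\mathbf{B}_{\Omega,N}\varphi(z - i\Omega k) = e^{-\pi i N k^T\Omega k + 2\pi N z^T k}\,\mathbf{B}_{\Omega,N}\varphi(z)$ for all $m,k \in \mathbb{Z}^d$. -/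

import Mathlib

open scoped BigOperators

/-- The complex quadratic form `vᵀ Ω v`. -/
noncomputable def quadFormC {d : ℕ} (Ω : Matrix (Fin d) (Fin d) ℂ) (v : Fin d → ℂ) : ℂ :=
  ∑ i, ∑ j, v i * Ω i j * v j

/-- The Riemann theta function of order `N`. -/
noncomputable def riemannTheta {d : ℕ} (N : ℕ) (Ω : Matrix (Fin d) (Fin d) ℂ)
    (z : Fin d → ℂ) : ℂ :=
  ∑' k : Fin d → ℤ,
    Complex.exp ((Real.pi : ℂ) * Complex.I * N * quadFormC Ω (fun i => (k i : ℂ))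
      + 2 * (Real.pi : ℂ) * Complex.I * N * ∑ i, (k i : ℂ) * z i)

/-- The Bargmann type transform of `φ = ∑_{n∈I_N} a_n ε_n`:
`B_{Ω,N}φ(z) = ∑_{n∈I_N} a_n e^{-π nᵀ(Ω/N)n} e^{2π zᵀn} ϑ_N(i(z + iΩn/N), Ω)`. -/
noncomputable def bargmann {d : ℕ} (N : ℕ) (Ω : Matrix (Fin d) (Fin d) ℂ)
    (a : (Fin d → Fin N) → ℂ) (z : Fin d → ℂ) : ℂ :=
  ∑ n : Fin d → Fin N, a n *
    Complex.exp (-(Real.pi : ℂ) * quadFormC Ω (fun i => ((n i : ℕ) : ℂ)) / N) *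
    Complex.exp (2 * (Real.pi : ℂ) * ∑ i, z i * ((n i : ℕ) : ℂ)) *
    riemannTheta N Ω (fun i =>
      Complex.I * (z i + Complex.I * (∑ j, Ω i j * ((n j : ℕ) : ℂ)) / N))

/-!
Each summand of `bargmann` is, up to a constant, `e^{2π zᵀn} ϑ_N(iz - Ωn/N, Ω)`. Replacing `z` by
`z + im` moves the theta argument by the integer vector `-m`, under which `ϑ_N` is periodic, and
multiplies `e^{2π zᵀn}` by `e^{2πi mᵀn} = 1`. Replacing `z` by `z - iΩk` moves the theta argument by
`Ωk`, which produces the factor `e^{-πiN kᵀΩk + 2πN zᵀk} e^{2πi kᵀΩn}`; since `Ω` is symmetric,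
the last factor cancels the `e^{-2πi (Ωk)ᵀn}` coming from `e^{2π zᵀn}`.
-/

open Matrix Complex Real

lemma quadFormC_eq_dotProduct_mulVec {d : ℕ} (Ω : Matrix (Fin d) (Fin d) ℂ) (v : Fin d → ℂ) :
    quadFormC Ω v = v ⬝ᵥ Ω *ᵥ v := by
  simp only [quadFormC, dotProduct, mulVec, Finset.mul_sum, mul_assoc]

lemma Matrix.IsSymm.dotProduct_mulVec_comm {n R : Type*} [Fintype n] [CommSemiring R]
    {A : Matrix n n R} (hA : A.IsSymm) (x y : n → R) : x ⬝ᵥ A *ᵥ y = y ⬝ᵥ A *ᵥ x := by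
  simpa only [hA.eq] using (dotProduct_transpose_mulVec A y x).symm

lemma quadFormC_sub {d : ℕ} {Ω : Matrix (Fin d) (Fin d) ℂ} (hΩ : Ω.IsSymm) (u v : Fin d → ℂ) :
    quadFormC Ω (u - v) = quadFormC Ω u - 2 * (u ⬝ᵥ Ω *ᵥ v) + quadFormC Ω v := by
  simp only [quadFormC_eq_dotProduct_mulVec, mulVec_sub, dotProduct_sub, sub_dotProduct]
  rw [hΩ.dotProduct_mulVec_comm v u]
  ring

lemma riemannTheta_add_intCast {d : ℕ} (N : ℕ) (Ω : Matrix (Fin d) (Fin d) ℂ)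
    (z : Fin d → ℂ) (m : Fin d → ℤ) :
    riemannTheta N Ω (z + fun i => (m i : ℂ)) = riemannTheta N Ω z := by
  unfold riemannTheta
  refine tsum_congr fun k => exp_eq_exp_iff_exists_int.2 ⟨N * ∑ i, k i * m i, ?_⟩
  push_cast
  simp only [Pi.add_apply, mul_add, Finset.sum_add_distrib]
  ring

lemma riemannTheta_add_mulVec_intCast {d : ℕ} (N : ℕ) {Ω : Matrix (Fin d) (Fin d) ℂ}
    (hΩ : Ω.IsSymm) (w : Fin d → ℂ) (k : Fin d → ℤ) :
    riemannTheta N Ω (w + Ω *ᵥ fun i => (k i : ℂ)) =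
      cexp (-π * I * N * quadFormC Ω (fun i => (k i : ℂ))
        - 2 * π * I * N * ((fun i => (k i : ℂ)) ⬝ᵥ w)) * riemannTheta N Ω w := by
  unfold riemannTheta
  -- after substituting `l - k` for the summation index this is completing the square
  rw [← tsum_mul_left, ← (Equiv.subRight k).tsum_eq]
  refine tsum_congr fun l => ?_
  have hcast : (fun i => ((l - k) i : ℂ)) = (fun i => (l i : ℂ)) - fun i => (k i : ℂ) := by
    ext i; simp
  simp only [← dotProduct.eq_1, Equiv.subRight_apply, hcast, quadFormC_sub hΩ, sub_dotProduct,
    dotProduct_add]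
  rw [← quadFormC_eq_dotProduct_mulVec, ← Complex.exp_add]
  congr 1
  ring

/-- `e^{2π zᵀv} ϑ_N(i(z + iΩv/N), Ω)`, the `z`-dependent factor of a summand of `bargmann`. -/
noncomputable def bargmannKernel {d : ℕ} (N : ℕ) (Ω : Matrix (Fin d) (Fin d) ℂ)
    (v z : Fin d → ℂ) : ℂ :=
  cexp (2 * π * (z ⬝ᵥ v)) * riemannTheta N Ω (I • z - (N : ℂ)⁻¹ • Ω *ᵥ v)

lemma bargmann_eq_sum_bargmannKernel {d : ℕ} (N : ℕ) (Ω : Matrix (Fin d) (Fin d) ℂ)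
    (a : (Fin d → Fin N) → ℂ) (z : Fin d → ℂ) :
    bargmann N Ω a z = ∑ n : Fin d → Fin N, a n *
      cexp (-π * quadFormC Ω (fun i => ((n i : ℕ) : ℂ)) / N) *
      bargmannKernel N Ω (fun i => ((n i : ℕ) : ℂ)) z := by
  refine Finset.sum_congr rfl fun n _ => ?_
  have harg : (fun i => I * (z i + I * (∑ j, Ω i j * ((n j : ℕ) : ℂ)) / N)) =
      I • z - (N : ℂ)⁻¹ • Ω *ᵥ fun i => ((n i : ℕ) : ℂ) := by
    ext i
    simp only [Pi.sub_apply, Pi.smul_apply, smul_eq_mul, mulVec, dotProduct]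
    linear_combination (∑ j, Ω i j * ((n j : ℕ) : ℂ)) / N * I_sq
  rw [bargmannKernel, harg, mul_assoc]
  rfl

lemma bargmannKernel_add_I_smul_intCast {d : ℕ} (N : ℕ) (Ω : Matrix (Fin d) (Fin d) ℂ)
    (n : Fin d → ℕ) (z : Fin d → ℂ) (m : Fin d → ℤ) :
    bargmannKernel N Ω (fun i => (n i : ℂ)) (z + I • fun i => (m i : ℂ)) =
      bargmannKernel N Ω (fun i => (n i : ℂ)) z := by
  have harg : I • (z + I • fun i => (m i : ℂ)) - (N : ℂ)⁻¹ • Ω *ᵥ (fun i => (n i : ℂ)) =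
      (I • z - (N : ℂ)⁻¹ • Ω *ᵥ fun i => (n i : ℂ)) + fun i => ((-m i : ℤ) : ℂ) := by
    ext i
    simp only [Pi.add_apply, Pi.sub_apply, Pi.smul_apply, smul_eq_mul, Int.cast_neg]
    linear_combination (m i : ℂ) * I_sq
  rw [bargmannKernel, bargmannKernel, harg, riemannTheta_add_intCast]
  congr 1
  refine exp_eq_exp_iff_exists_int.2 ⟨∑ i, m i * n i, ?_⟩
  rw [add_dotProduct, smul_dotProduct, smul_eq_mul]
  push_cast
  simp only [dotProduct]
  ring

lemma bargmannKernel_sub_I_smul_mulVec_intCast {d : ℕ} {N : ℕ} (hN : N ≠ 0)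
    {Ω : Matrix (Fin d) (Fin d) ℂ} (hΩ : Ω.IsSymm) (v z : Fin d → ℂ) (k : Fin d → ℤ) :
    bargmannKernel N Ω v (z - I • Ω *ᵥ fun i => (k i : ℂ)) =
      cexp (-π * I * N * quadFormC Ω (fun i => (k i : ℂ))
        + 2 * π * N * (z ⬝ᵥ fun i => (k i : ℂ))) * bargmannKernel N Ω v z := by
  have harg : I • (z - I • Ω *ᵥ fun i => (k i : ℂ)) - (N : ℂ)⁻¹ • Ω *ᵥ v =
      (I • z - (N : ℂ)⁻¹ • Ω *ᵥ v) + Ω *ᵥ fun i => (k i : ℂ) := by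
    ext i
    simp only [Pi.add_apply, Pi.sub_apply, Pi.smul_apply, smul_eq_mul]
    linear_combination (-(Ω *ᵥ fun i => (k i : ℂ)) i) * I_sq
  rw [bargmannKernel, bargmannKernel, harg, riemannTheta_add_mulVec_intCast N hΩ,
    ← mul_assoc, ← mul_assoc, ← Complex.exp_add, ← Complex.exp_add]
  congr 2
  set kc : Fin d → ℂ := fun i => (k i : ℂ)
  simp only [sub_dotProduct, dotProduct_sub, smul_dotProduct, dotProduct_smul, smul_eq_mul,
    hΩ.dotProduct_mulVec_comm kc v, dotProduct_comm kc z, dotProduct_comm (Ω *ᵥ kc) v]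
  have hNinv : (N : ℂ) * (N : ℂ)⁻¹ = 1 := mul_inv_cancel₀ (Nat.cast_ne_zero.2 hN)
  linear_combination (2 * π * I * (v ⬝ᵥ Ω *ᵥ kc)) * hNinv - (2 * π * N * (z ⬝ᵥ kc)) * I_sq

theorem bargmann_quasiperiodic_general {d : ℕ} (N : ℕ) (hN : 0 < N)
    (Ω : Matrix (Fin d) (Fin d) ℂ) (hΩsym : Ω.IsSymm)
    (a : (Fin d → Fin N) → ℂ) (z : Fin d → ℂ) (m k : Fin d → ℤ) :
    bargmann N Ω a (fun i => z i + Complex.I * (m i : ℂ)) = bargmann N Ω a z ∧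
    bargmann N Ω a (fun i => z i - Complex.I * ∑ j, Ω i j * (k j : ℂ)) =
      Complex.exp (-(Real.pi : ℂ) * Complex.I * N * quadFormC Ω (fun i => (k i : ℂ))
          + 2 * (Real.pi : ℂ) * N * ∑ i, z i * (k i : ℂ)) *
        bargmann N Ω a z := by
  constructor
  · change bargmann N Ω a (z + I • fun i => (m i : ℂ)) = _
    simp only [bargmann_eq_sum_bargmannKernel, bargmannKernel_add_I_smul_intCast]
  · change bargmann N Ω a (z - I • Ω *ᵥ fun i => (k i : ℂ)) =
      cexp (_ + 2 * π * N * (z ⬝ᵥ fun i => (k i : ℂ))) * _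
    simp only [bargmann_eq_sum_bargmannKernel, Finset.mul_sum,
      bargmannKernel_sub_I_smul_mulVec_intCast hN.ne' hΩsym]
    exact Finset.sum_congr rfl fun n _ => by ring

/-- the Bargmann type transform is quasi-periodic:
`B(z+im) = B(z)` and `B(z-iΩk) = e^{-πiN kᵀΩk + 2πN zᵀk} B(z)` for `m,k ∈ ℤᵈ`. -/
theorem bargmann_quasiperiodic {d : ℕ} (N : ℕ) (hN : 0 < N)
    (Ω : Matrix (Fin d) (Fin d) ℂ) (hΩsym : Ω.IsSymm)
    (hΩpos : (Ω.map Complex.im).PosDef)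
    (a : (Fin d → Fin N) → ℂ) (z : Fin d → ℂ) (m k : Fin d → ℤ) :
    bargmann N Ω a (fun i => z i + Complex.I * (m i : ℂ)) = bargmann N Ω a z ∧
    bargmann N Ω a (fun i => z i - Complex.I * ∑ j, Ω i j * (k j : ℂ)) =
      Complex.exp (-(Real.pi : ℂ) * Complex.I * N * quadFormC Ω (fun i => (k i : ℂ))
          + 2 * (Real.pi : ℂ) * N * ∑ i, z i * (k i : ℂ)) *
        bargmann N Ω a z :=
  bargmann_quasiperiodic_general N hN Ω hΩsym a z m k
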